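/- The 7-dimensional complex representation of the group ⟨P_ᾶ, P_β̃, δ⟩ ≤ GL₇(ℚ) (a copy of PSL₂(7)) is irreducible: the only ℂ-linear subspaces of ℂ⁷ invariant under the three matrices P_ᾶ, P_β̃ and δ are {0} and ℂ⁷. In contrast, the line spanned by (1,1,1,1,1,1,1) is invariant under P_ᾶ, P_β̃ and P_γ̃, so the 7-dimensional representation of ⟨P_ᾶ, P_β̃, P_γ̃⟩ is reducible. -/
import Mathlib

open Matrix Equiv

/-- `PSL₂(7)`: the quotient of `SL(2, ℤ/7ℤ)` by its center. -/
abbrev PSL₂7 : Type :=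
  Matrix.SpecialLinearGroup (Fin 2) (ZMod 7) ⧸
    Subgroup.center (Matrix.SpecialLinearGroup (Fin 2) (ZMod 7))

/-- The permutation matrix of `σ` (sending the basis vector `eⱼ` to `e_{σ j}`),
as an element of `GL₇(ℚ)`.  (We index the basis `e₁, …, e₇` of the paper by `Fin 7`,
so `e_{i+1}` corresponds to index `i`.) -/
def permGL (σ : Equiv.Perm (Fin 7)) : GL (Fin 7) ℚ :=
  ⟨(σ⁻¹).permMatrix ℚ, σ.permMatrix ℚ,
    by rw [← PEquiv.toMatrix_trans, ← Equiv.toPEquiv_trans]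
       simp [Equiv.Perm.inv_def, Equiv.toPEquiv_refl],
    by rw [← PEquiv.toMatrix_trans, ← Equiv.toPEquiv_trans]
       simp [Equiv.Perm.inv_def, Equiv.toPEquiv_refl]⟩

theorem diag_mul_self (v : Fin 7 → ℚ) (h : ∀ i, v i * v i = 1) :
    Matrix.diagonal v * Matrix.diagonal v = 1 := by
  rw [Matrix.diagonal_mul_diagonal]
  have hv : (fun i => v i * v i) = fun _ => (1 : ℚ) := funext h
  rw [hv]
  exact Matrix.diagonal_one

/-- A diagonal `±1` matrix as an element of `GL₇(ℚ)`. -/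
def diagGL (v : Fin 7 → ℚ) (h : ∀ i, v i * v i = 1) : GL (Fin 7) ℚ :=
  ⟨Matrix.diagonal v, Matrix.diagonal v, diag_mul_self v h, diag_mul_self v h⟩

/-- `ᾶ`, the 7-cycle `(1 2 4 3 6 5 7)` of the paper, written 0-indexed on `Fin 7`. -/
def α : Equiv.Perm (Fin 7) := c[0, 1, 3, 2, 5, 4, 6]

/-- `β̃ = (3 2 1)(4 6 5)` of the paper, written 0-indexed on `Fin 7`. -/
def βt : Equiv.Perm (Fin 7) := c[2, 1, 0] * c[3, 5, 4]

/-- `γ̃ = (1 5)(3 7)` of the paper, written 0-indexed on `Fin 7`. -/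
def γt : Equiv.Perm (Fin 7) := c[0, 4] * c[2, 6]

/-- `δ`: the signed permutation matrix with `e₁ ↦ -e₅`, `e₅ ↦ -e₁`, `e₃ ↦ -e₇`, `e₇ ↦ -e₃`,
fixing `e₂, e₄, e₆` (0-indexed: `e₀ ↦ -e₄` etc.). -/
def δGL : GL (Fin 7) ℚ :=
  diagGL ![-1, 1, -1, 1, -1, 1, -1] (by intro i; fin_cases i <;> norm_num [Matrix.cons_val_succ]) *
    permGL (c[0, 4] * c[2, 6])

/-- A rational matrix viewed as a complex matrix. -/
noncomputable def toC (A : Matrix (Fin 7) (Fin 7) ℚ) : Matrix (Fin 7) (Fin 7) ℂ :=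
  A.map (fun x => (x : ℂ))

/-! ### Auxiliary integer matrices -/

def AZ : Matrix (Fin 7) (Fin 7) ℤ :=
  !![0,0,0,0,0,0,1; 1,0,0,0,0,0,0; 0,0,0,1,0,0,0; 0,1,0,0,0,0,0;
     0,0,0,0,0,1,0; 0,0,1,0,0,0,0; 0,0,0,0,1,0,0]

def DZ : Matrix (Fin 7) (Fin 7) ℤ :=
  !![0,0,0,0,-1,0,0; 0,1,0,0,0,0,0; 0,0,0,0,0,0,-1; 0,0,0,1,0,0,0;
     -1,0,0,0,0,0,0; 0,0,0,0,0,1,0; 0,0,-1,0,0,0,0]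

def MZ : Matrix (Fin 7) (Fin 7) ℤ :=
  !![-1, 1, -1, 1, -1, 1, -1;
   1, 1, 1, -1, -1, -1, -1;
   1, -1, -1, 1, -1, -1, 1;
   -1, 1, -1, -1, 1, -1, 1;
   1, -1, -1, -1, 1, 1, -1;
   -1, -1, 1, -1, -1, 1, 1;
   -1, -1, 1, 1, 1, -1, -1]

def MiZ : Matrix (Fin 7) (Fin 7) ℤ :=
  !![-1, 0, 0, -1, 0, -1, -1;
   0, 0, -1, 0, -1, -1, -1;
   -1, 0, -1, -1, -1, 0, 0;
   0, -1, 0, -1, -1, -1, 0;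
   -1, -1, -1, 0, 0, -1, 0;
   0, -1, -1, -1, 0, 0, -1;
   -1, -1, 0, 0, -1, 0, -1]

def NZ : Matrix (Fin 7) (Fin 7) ℤ :=
  !![-1, -1, -1, 1, -1, 1, 1;
   1, -1, -1, -1, 1, -1, 1;
   -1, 1, 1, -1, -1, -1, 1;
   1, 1, -1, -1, -1, 1, -1;
   -1, 1, -1, 1, 1, -1, -1;
   1, -1, 1, 1, -1, -1, -1;
   -1, -1, 1, -1, 1, 1, -1]

def NiZ : Matrix (Fin 7) (Fin 7) ℤ :=
  !![-1, 0, -1, 0, -1, 0, -1;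
   -1, -1, 0, 0, 0, -1, -1;
   -1, -1, 0, -1, -1, 0, 0;
   0, -1, -1, -1, 0, 0, -1;
   -1, 0, -1, -1, 0, -1, 0;
   0, -1, -1, 0, -1, -1, 0;
   0, 0, 0, -1, -1, -1, -1]

/-! ### Casting lemmas -/

lemma mapC_mul (X Y : Matrix (Fin 7) (Fin 7) ℤ) :
    (X * Y).map (fun x : ℤ => (x : ℂ)) =
      X.map (fun x : ℤ => (x : ℂ)) * Y.map (fun x : ℤ => (x : ℂ)) := by
  have := Matrix.map_mul (L := X) (M := Y) (f := Int.castRingHom ℂ)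
  simpa using this

lemma mapC_one : (1 : Matrix (Fin 7) (Fin 7) ℤ).map (fun x : ℤ => (x : ℂ)) = 1 := by
  ext i j
  by_cases h : i = j <;> simp [Matrix.map_apply, Matrix.one_apply, h]

lemma sum_mulVec7 (f : Fin 7 → Matrix (Fin 7) (Fin 7) ℂ) (v : Fin 7 → ℂ) :
    (∑ m : Fin 7, f m).mulVec v = ∑ m : Fin 7, (f m).mulVec v := by
  funext i
  simp only [Matrix.mulVec, dotProduct, Matrix.sum_apply, Finset.sum_apply,
    Finset.sum_mul]
  exact Finset.sum_comm

lemma mapC_pow (X : Matrix (Fin 7) (Fin 7) ℤ) (k : ℕ) :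
    (X ^ k).map (fun x : ℤ => (x : ℂ)) = (X.map (fun x : ℤ => (x : ℂ))) ^ k := by
  induction k with
  | zero => simp only [pow_zero]; exact mapC_one
  | succ n ih => rw [pow_succ, pow_succ, mapC_mul, ih]

lemma mapC_mulVec (X : Matrix (Fin 7) (Fin 7) ℤ) (u : Fin 7 → ℤ) :
    (X.map (fun x : ℤ => (x : ℂ))).mulVec (fun i => ((u i : ℤ) : ℂ)) =
      fun i => ((X.mulVec u i : ℤ) : ℂ) := by
  funext i
  simp only [Matrix.mulVec, dotProduct, Matrix.map_apply]
  push_cast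
  rfl

lemma mapC_vecMul (X : Matrix (Fin 7) (Fin 7) ℤ) (u : Fin 7 → ℤ) :
    Matrix.vecMul (fun i => ((u i : ℤ) : ℂ)) (X.map (fun x : ℤ => (x : ℂ))) =
      fun j => ((Matrix.vecMul u X j : ℤ) : ℂ) := by
  funext j
  simp only [Matrix.vecMul, dotProduct, Matrix.map_apply]
  push_cast
  rfl

lemma toC_int (X : Matrix (Fin 7) (Fin 7) ℤ) :
    toC (X.map (fun x : ℤ => (x : ℚ))) = X.map (fun x : ℤ => (x : ℂ)) := by
  ext i j
  simp [toC, Matrix.map_apply]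

lemma mapC_diag4 :
    (Matrix.diagonal (fun _ : Fin 7 => (4 : ℤ))).map (fun x : ℤ => (x : ℂ)) =
      (4 : ℂ) • (1 : Matrix (Fin 7) (Fin 7) ℂ) := by
  ext i j
  by_cases h : i = j <;>
    simp [Matrix.map_apply, Matrix.diagonal_apply, Matrix.one_apply, h]

/-- Cast version of a rational mulVec with ones. -/
lemma ratC_mulVec_ones (X : Matrix (Fin 7) (Fin 7) ℚ)
    (h : X.mulVec (fun _ => (1 : ℚ)) = fun _ => 1) :
    (toC X).mulVec (fun _ => (1 : ℂ)) = fun _ => 1 := by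
  funext i
  have h' := congrFun h i
  unfold toC
  simp only [Matrix.mulVec, dotProduct, Matrix.map_apply] at h' ⊢
  have : (((∑ j, X i j * 1 : ℚ)) : ℂ) = ((1 : ℚ) : ℂ) := by rw [h']
  push_cast at this
  simpa using this

/-- Any of our permutation matrices sends the all-ones vector to itself. -/
lemma perm_mulVec_ones (σ : Equiv.Perm (Fin 7)) :
    (permGL σ).val.mulVec (fun _ => (1 : ℚ)) = fun _ => 1 := by
  funext i
  simp [permGL, Matrix.mulVec, dotProduct, Equiv.Perm.permMatrix,
    PEquiv.toMatrix_apply, Equiv.toPEquiv_apply, Finset.sum_ite_eq]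

/-! ### The computational facts, verified by `decide`. -/

lemma hAZ : (permGL α).val = AZ.map (fun x : ℤ => (x : ℚ)) := by decide

lemma hdiagZ : (diagGL ![-1, 1, -1, 1, -1, 1, -1]
    (by intro i; fin_cases i <;> norm_num [Matrix.cons_val_succ])).val =
    (Matrix.diagonal ![-1, 1, -1, 1, -1, 1, -1] : Matrix (Fin 7) (Fin 7) ℤ).map
      (fun x : ℤ => (x : ℚ)) := by decide

lemma hpermγZ : (permGL (c[0, 4] * c[2, 6])).val =
    (!![0,0,0,0,1,0,0; 0,1,0,0,0,0,0; 0,0,0,0,0,0,1; 0,0,0,1,0,0,0;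
       1,0,0,0,0,0,0; 0,0,0,0,0,1,0; 0,0,1,0,0,0,0] : Matrix (Fin 7) (Fin 7) ℤ).map
      (fun x : ℤ => (x : ℚ)) := by decide

lemma hDZmul : (Matrix.diagonal ![-1, 1, -1, 1, -1, 1, -1] : Matrix (Fin 7) (Fin 7) ℤ) *
    !![0,0,0,0,1,0,0; 0,1,0,0,0,0,0; 0,0,0,0,0,0,1; 0,0,0,1,0,0,0;
       1,0,0,0,0,0,0; 0,0,0,0,0,1,0; 0,0,1,0,0,0,0] = DZ := by decide

lemma hMiM : MiZ * MZ = Matrix.diagonal (fun _ => (4 : ℤ)) := by decide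

lemma hNNi : NZ * NiZ = Matrix.diagonal (fun _ => (4 : ℤ)) := by decide

lemma hAsum : (∑ m : Fin 7, AZ ^ (m : ℕ)) = Matrix.of (fun _ _ => (1 : ℤ)) := by decide

lemma hMrow : ∀ k : Fin 7,
    Matrix.vecMul (fun _ => (1 : ℤ)) (DZ * AZ ^ (k : ℕ)) = fun j => MZ k j := by decide

lemma hNcol : ∀ k : Fin 7,
    (AZ ^ (k : ℕ)).mulVec (DZ.mulVec (fun _ => 1)) = fun j => NZ j k := by decide

/-- `δGL.val` as a cast integer matrix. -/
lemma hDZ : δGL.val = DZ.map (fun x : ℤ => (x : ℚ)) := by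
  have : δGL.val = (diagGL ![-1, 1, -1, 1, -1, 1, -1]
      (by intro i; fin_cases i <;> norm_num [Matrix.cons_val_succ])).val *
      (permGL (c[0, 4] * c[2, 6])).val := rfl
  rw [this, hdiagZ, hpermγZ]
  rw [← hDZmul]
  have := Matrix.map_mul (L := (Matrix.diagonal ![-1, 1, -1, 1, -1, 1, -1] :
      Matrix (Fin 7) (Fin 7) ℤ))
    (M := (!![0,0,0,0,1,0,0; 0,1,0,0,0,0,0; 0,0,0,0,0,0,1; 0,0,0,1,0,0,0;
       1,0,0,0,0,0,0; 0,0,0,0,0,1,0; 0,0,1,0,0,0,0] : Matrix (Fin 7) (Fin 7) ℤ))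
    (f := Int.castRingHom ℚ)
  simpa using this.symm

theorem stmt14 :
    (∀ W : Submodule ℂ (Fin 7 → ℂ),
      (∀ w ∈ W, (toC (permGL α).val).mulVec w ∈ W) →
      (∀ w ∈ W, (toC (permGL βt).val).mulVec w ∈ W) →
      (∀ w ∈ W, (toC δGL.val).mulVec w ∈ W) →
      W = ⊥ ∨ W = ⊤) ∧
    (∀ w ∈ Submodule.span ℂ {(fun _ => 1 : Fin 7 → ℂ)},
      (toC (permGL α).val).mulVec w ∈ Submodule.span ℂ {(fun _ => 1 : Fin 7 → ℂ)} ∧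
      (toC (permGL βt).val).mulVec w ∈ Submodule.span ℂ {(fun _ => 1 : Fin 7 → ℂ)} ∧
      (toC (permGL γt).val).mulVec w ∈ Submodule.span ℂ {(fun _ => 1 : Fin 7 → ℂ)}) ∧
    Submodule.span ℂ {(fun _ => 1 : Fin 7 → ℂ)} ≠ ⊥ ∧
    Submodule.span ℂ {(fun _ => 1 : Fin 7 → ℂ)} ≠ (⊤ : Submodule ℂ (Fin 7 → ℂ)) := by
  have cast_A : toC (permGL α).val = AZ.map (fun x : ℤ => (x : ℂ)) := by
    rw [hAZ, toC_int]
  have cast_D : toC δGL.val = DZ.map (fun x : ℤ => (x : ℂ)) := by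
    rw [hDZ, toC_int]
  set AC : Matrix (Fin 7) (Fin 7) ℂ := AZ.map (fun x : ℤ => (x : ℂ)) with hAC
  set DC : Matrix (Fin 7) (Fin 7) ℂ := DZ.map (fun x : ℤ => (x : ℂ)) with hDC
  set ones : Fin 7 → ℂ := fun _ => 1 with hones
  refine ⟨?_, ?_, ?_, ?_⟩
  · -- irreducibility
    intro W hWa _ hWd
    rw [cast_A] at hWa
    rw [cast_D] at hWd
    by_cases hbot : W = ⊥
    · exact Or.inl hbot
    right
    obtain ⟨w, hwW, hw0⟩ := (Submodule.ne_bot_iff W).mp hbot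
    -- closure under powers of A
    have hpow : ∀ (k : ℕ), ∀ w ∈ W, (AC ^ k).mulVec w ∈ W := by
      intro k
      induction k with
      | zero => intro w hw; simpa [Matrix.one_mulVec] using hw
      | succ n ih =>
          intro w hw
          have h1 := ih _ (hWa w hw)
          rw [Matrix.mulVec_mulVec, ← pow_succ] at h1
          exact h1
    -- injectivity coming from M
    have hMinj : ∀ u : Fin 7 → ℂ, (MZ.map (fun x : ℤ => (x : ℂ))).mulVec u = 0 → u = 0 := by
      intro u hu
      have h1 : ((MiZ.map (fun x : ℤ => (x : ℂ))) * (MZ.map (fun x : ℤ => (x : ℂ)))).mulVec u = (4 : ℂ) • u := by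
        rw [← mapC_mul, hMiM, mapC_diag4, Matrix.smul_mulVec, Matrix.one_mulVec]
      rw [← Matrix.mulVec_mulVec, hu, Matrix.mulVec_zero] at h1
      have h4 : (4 : ℂ) ≠ 0 := by norm_num
      calc u = (4 : ℂ)⁻¹ • ((4 : ℂ) • u) := by rw [smul_smul, inv_mul_cancel₀ h4, one_smul]
        _ = 0 := by rw [← h1]; simp
    -- find a translate of w with nonzero coordinate sum
    have key : ∃ k : Fin 7, ones ⬝ᵥ (DC.mulVec ((AC ^ (k : ℕ)).mulVec w)) ≠ 0 := by
      by_contra h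
      push_neg at h
      apply hw0
      apply hMinj
      funext k
      have hrow : Matrix.vecMul ones (DC * AC ^ (k : ℕ)) = fun j => ((MZ k j : ℤ) : ℂ) := by
        have h2 : DC * AC ^ (k : ℕ) = (DZ * AZ ^ (k : ℕ)).map (fun x : ℤ => (x : ℂ)) := by
          rw [mapC_mul, mapC_pow]
        rw [h2]
        have h3 := mapC_vecMul (DZ * AZ ^ (k : ℕ)) (fun _ => 1)
        simp only [Int.cast_one] at h3
        rw [hones, h3, hMrow k]
      have h4 : ((MZ.map (fun x : ℤ => (x : ℂ))).mulVec w) k = Matrix.vecMul ones (DC * AC ^ (k : ℕ)) ⬝ᵥ w := by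
        rw [hrow]
        simp [Matrix.mulVec, dotProduct, Matrix.map_apply]
      rw [h4, ← Matrix.dotProduct_mulVec, ← Matrix.mulVec_mulVec]
      exact h k
    obtain ⟨k, hk⟩ := key
    set u : Fin 7 → ℂ := DC.mulVec ((AC ^ (k : ℕ)).mulVec w) with hu
    have huW : u ∈ W := hWd _ (hpow _ _ hwW)
    -- the all-ones vector lies in W
    have honesW : ones ∈ W := by
      have hsum : (∑ m : Fin 7, (AC ^ (m : ℕ)).mulVec u) ∈ W :=
        Submodule.sum_mem _ (fun m _ => hpow _ _ huW)
      have heq : (∑ m : Fin 7, (AC ^ (m : ℕ)).mulVec u) = (ones ⬝ᵥ u) • ones := by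
        have h1 : (∑ m : Fin 7, (AC ^ (m : ℕ)).mulVec u) =
            (∑ m : Fin 7, AC ^ (m : ℕ)).mulVec u := by
          rw [sum_mulVec7]
        have h2 : (∑ m : Fin 7, AC ^ (m : ℕ)) = Matrix.of (fun _ _ => (1 : ℂ)) := by
          have h3 : (∑ m : Fin 7, AC ^ (m : ℕ)) = (∑ m : Fin 7, AZ ^ (m : ℕ)).map (fun x : ℤ => (x : ℂ)) := by
            ext i j
            rw [Matrix.sum_apply]
            have hterm : ∀ m : Fin 7, (AC ^ (m : ℕ)) i j = (((AZ ^ (m : ℕ)) i j : ℤ) : ℂ) := by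
              intro m; rw [← mapC_pow]; rfl
            simp only [hterm, Matrix.map_apply, Matrix.sum_apply]
            push_cast
            ring
          rw [h3, hAsum]
          ext i j
          simp [Matrix.map_apply]
        rw [h1, h2]
        funext i
        simp [Matrix.mulVec, dotProduct, Matrix.of_apply, Pi.smul_apply, smul_eq_mul,
          hones]
      rw [heq] at hsum
      have := Submodule.smul_mem W (ones ⬝ᵥ u)⁻¹ hsum
      rwa [smul_smul, inv_mul_cancel₀ hk, one_smul] at this
    -- conclude W = ⊤
    rw [eq_top_iff]
    intro x _
    have hvW : DC.mulVec ones ∈ W := hWd _ honesW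
    have hcolW : ∀ m : Fin 7, (AC ^ (m : ℕ)).mulVec (DC.mulVec ones) ∈ W :=
      fun m => hpow _ _ hvW
    have hcol : ∀ m : Fin 7, (AC ^ (m : ℕ)).mulVec (DC.mulVec ones) =
        fun j => ((NZ j m : ℤ) : ℂ) := by
      intro m
      have h1 : DC.mulVec ones = fun i => ((DZ.mulVec (fun _ => 1) i : ℤ) : ℂ) := by
        have := mapC_mulVec DZ (fun _ => 1)
        simp only [Int.cast_one] at this
        rw [hDC, hones, this]
      have h2 : AC ^ (m : ℕ) = (AZ ^ (m : ℕ)).map (fun x : ℤ => (x : ℂ)) := (mapC_pow AZ (m : ℕ)).symm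
      rw [h1, h2, mapC_mulVec]
      funext j
      rw [show (AZ ^ (m : ℕ)).mulVec (DZ.mulVec fun _ => 1) = fun j => NZ j m from hNcol m]
    set cvec : Fin 7 → ℂ := (NiZ.map (fun x : ℤ => (x : ℂ))).mulVec x with hcvec
    have hx : x = ∑ m : Fin 7, ((4 : ℂ)⁻¹ * cvec m) •
        ((AC ^ (m : ℕ)).mulVec (DC.mulVec ones)) := by
      have hNN : (NZ.map (fun x : ℤ => (x : ℂ))).mulVec cvec = (4 : ℂ) • x := by
        rw [hcvec, Matrix.mulVec_mulVec, ← mapC_mul, hNNi, mapC_diag4,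
          Matrix.smul_mulVec, Matrix.one_mulVec]
      funext j
      have h5 : (∑ m : Fin 7, ((4 : ℂ)⁻¹ * cvec m) •
          ((AC ^ (m : ℕ)).mulVec (DC.mulVec ones))) j =
          (4 : ℂ)⁻¹ * ∑ m : Fin 7, ((NZ j m : ℤ) : ℂ) * cvec m := by
        rw [Finset.sum_apply, Finset.mul_sum]
        refine Finset.sum_congr rfl (fun m _ => ?_)
        rw [hcol m]
        simp only [Pi.smul_apply, smul_eq_mul]
        ring
      have h6 : (∑ m : Fin 7, ((NZ j m : ℤ) : ℂ) * cvec m) = ((NZ.map (fun x : ℤ => (x : ℂ))).mulVec cvec) j := by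
        simp [Matrix.mulVec, dotProduct, Matrix.map_apply]
      rw [h5, h6, hNN]
      simp only [Pi.smul_apply, smul_eq_mul]
      ring
    rw [hx]
    exact Submodule.sum_mem _ (fun m _ => Submodule.smul_mem _ _ (hcolW m))
  · -- invariance of the span of the all-ones vector
    intro w hw
    rw [Submodule.mem_span_singleton] at hw
    obtain ⟨a, rfl⟩ := hw
    have hmem : ∀ X : Matrix (Fin 7) (Fin 7) ℂ, X.mulVec (fun _ => 1) = (fun _ => 1) →
        X.mulVec (a • (fun _ => 1 : Fin 7 → ℂ)) ∈
          Submodule.span ℂ {(fun _ => 1 : Fin 7 → ℂ)} := by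
      intro X hX
      rw [Matrix.mulVec_smul, hX]
      exact Submodule.smul_mem _ a (Submodule.mem_span_singleton_self _)
    exact ⟨hmem _ (ratC_mulVec_ones _ (perm_mulVec_ones α)),
      hmem _ (ratC_mulVec_ones _ (perm_mulVec_ones βt)),
      hmem _ (ratC_mulVec_ones _ (perm_mulVec_ones γt))⟩
  · -- the span is not ⊥
    intro h
    rw [Submodule.span_singleton_eq_bot] at h
    exact one_ne_zero (congrFun h 0)
  · -- the span is not ⊤
    intro h
    have hmem : Pi.single (0 : Fin 7) (1 : ℂ) ∈
        Submodule.span ℂ {(fun _ => 1 : Fin 7 → ℂ)} := by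
      rw [h]; exact Submodule.mem_top
    rw [Submodule.mem_span_singleton] at hmem
    obtain ⟨a, ha⟩ := hmem
    have h0 := congrFun ha 0
    have h1 := congrFun ha 1
    simp [Pi.single_apply] at h0 h1
    rw [h1] at h0
    exact one_ne_zero h0.symm
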